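/- arXiv:1806.05002 — 3 statements merged into one kernel-verified Lean document; each statement's English description precedes it below -/
import Mathlib

section
/- Let N, M ∈ ℕ and let B ⊆ [N] satisfy B ∩ q·[M] ≠ ∅ for every positive integer q with q·[M] ⊆ [N] (i.e. B is M-homogeneous in [N]). Then |B| ≥ (1/M)·⌊N/M⌋. -/
/-- **Homogeneous sets are dense.** If `B ⊆ [N]` is `M`-homogeneous in `[N]`,
then `|B| ≥ (1/M)⌊N/M⌋`. -/
theorem homogeneous_sets_are_dense (N M : ℕ) (B : Set ℕ)
    (hBN : B ⊆ Set.Icc 1 N)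
    (hB : ∀ q : ℕ, 0 < q → (∀ m : ℕ, 1 ≤ m → m ≤ M → q * m ∈ Set.Icc 1 N) →
      ∃ m : ℕ, 1 ≤ m ∧ m ≤ M ∧ q * m ∈ B) :
    (1 / (M : ℝ)) * ((N / M : ℕ) : ℝ) ≤ (B.ncard : ℝ) := by
  rcases Nat.eq_zero_or_pos M with hM | hM
  · simp [hM]
  -- B is finite
  have hfin : B.Finite := (Set.finite_Icc 1 N).subset hBN
  set K := N / M with hK
  -- for each q in [1,K], q·[M] ⊆ [N]
  have hqM : ∀ q ∈ Finset.Icc 1 K, ∃ m : ℕ, 1 ≤ m ∧ m ≤ M ∧ q * m ∈ B := by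
    intro q hq
    rw [Finset.mem_Icc] at hq
    refine hB q hq.1 fun m hm1 hmM => ?_
    constructor
    · exact Nat.mul_pos hq.1 hm1
    · calc q * m ≤ K * M := Nat.mul_le_mul hq.2 hmM
        _ ≤ N := Nat.div_mul_le_self N M
  choose f hf1 hfM hfB using hqM
  classical
  -- map q ↦ q * f q into the finset of B; each fiber has size ≤ M
  have key : (Finset.Icc 1 K).card ≤ M * hfin.toFinset.card := by
    apply Finset.card_le_mul_card_image_of_maps_to
      (f := fun q => if h : q ∈ Finset.Icc 1 K then q * f q h else 0)
    · intro q hq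
      simp only [hq, dif_pos]
      exact hfin.mem_toFinset.2 (hfB q hq)
    · intro b _
      -- fiber injects into Icc 1 M via q ↦ f q
      have : ((Finset.Icc 1 K).filter fun q =>
          (if h : q ∈ Finset.Icc 1 K then q * f q h else 0) = b).card
          ≤ (Finset.Icc 1 M).card := by
        apply Finset.card_le_card_of_injOn
          (fun q => if h : q ∈ Finset.Icc 1 K then f q h else 0)
        · intro q hq
          rw [Finset.mem_coe, Finset.mem_filter] at hq
          simp only [hq.1, dif_pos]
          exact Finset.mem_Icc.2 ⟨hf1 q hq.1, hfM q hq.1⟩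
        · intro q1 hq1 q2 hq2 heq
          rw [Finset.mem_coe, Finset.mem_filter] at hq1 hq2
          obtain ⟨h1, e1⟩ := hq1
          obtain ⟨h2, e2⟩ := hq2
          simp only [h1, h2, dif_pos] at heq e1 e2
          rw [← heq] at e2
          exact Nat.eq_of_mul_eq_mul_right (hf1 q1 h1) (e1.trans e2.symm)
      simpa [Nat.card_Icc] using this
  rw [Nat.card_Icc] at key
  simp only [Nat.add_sub_cancel] at key
  have hncard : B.ncard = hfin.toFinset.card := Set.ncard_eq_toFinset_card B hfin
  have hMpos : (0:ℝ) < M := by exact_mod_cast hM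
  rw [div_mul_eq_mul_div, one_mul, div_le_iff₀ hMpos, hncard]
  calc ((K:ℝ)) ≤ (M * hfin.toFinset.card : ℕ) := by exact_mod_cast key
    _ = (hfin.toFinset.card : ℝ) * M := by push_cast; ring
end

section
/- Let d, M, N ∈ ℕ with N ≥ 64M², and let B₁,…,B_d be M-homogeneous sets of positive integers, with B = B₁ × ⋯ × B_d. Then the number of triples (x, x', y) with x, x' ∈ [N]^d, y ∈ B, and x − x' = (y₁², …, y_d²) is at least (N^{3/2}/(8M²))^d. -/
set_option maxHeartbeats 800000

/-- A set `B` of positive integers is `M`-homogeneous if it meets the homogeneous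
progression `q·[M] = {q, 2q, …, Mq}` for every positive integer `q`. -/
def MHomogeneous (M : ℕ) (B : Set ℕ) : Prop :=
  ∀ q : ℕ, 0 < q → ∃ m : ℕ, 1 ≤ m ∧ m ≤ M ∧ q * m ∈ B

lemma single_count (M N : ℕ) (hN : 64 * M ^ 2 ≤ N) (B : Set ℕ)
    (hBpos : ∀ b ∈ B, 0 < b) (hB : MHomogeneous M B) :
    (N : ℝ) ^ ((3 : ℝ) / 2) / (8 * (M : ℝ) ^ 2) ≤
      (({p : ℕ × ℕ × ℕ | p.1 ∈ Set.Icc 1 N ∧ p.2.1 ∈ Set.Icc 1 N ∧ p.2.2 ∈ B ∧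
          (p.1 : ℤ) - (p.2.1 : ℤ) = (p.2.2 : ℤ) ^ 2}.ncard : ℝ)) := by
  obtain ⟨m1, hm11, hm12, -⟩ := hB 1 one_pos
  have hM : 1 ≤ M := hm11.trans hm12
  have hN64 : 64 ≤ N := le_trans (by nlinarith) hN
  set s := Nat.sqrt N with hs
  have hsM : 8 * M ≤ s := Nat.le_sqrt'.2 (by nlinarith)
  have hM2 : 0 < 2 * M := by omega
  set Q := s / (2 * M) with hQ
  choose m hm1 hm2 hmB using fun q : ℕ => hB (q + 1) q.succ_pos
  set y : ℕ → ℕ := fun q => (q + 1) * m q with hy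
  set Y := (Finset.range Q).image y with hY
  -- fiber bound
  have hcard : Q ≤ M * Y.card := by
    have h := Finset.card_le_mul_card_image (f := y) (Finset.range Q) M ?_
    · simpa using h
    · intro b hb
      have : ((Finset.range Q).filter fun a => y a = b).card ≤ (Finset.Icc 1 M).card := by
        apply Finset.card_le_card_of_injOn m
        · intro q hq
          exact Finset.mem_Icc.2 ⟨hm1 q, hm2 q⟩
        · intro q1 h1 q2 h2 heq
          simp only [Finset.mem_coe, Finset.mem_filter] at h1 h2
          have h3 : (q1 + 1) * m q1 = (q2 + 1) * m q2 := h1.2.trans h2.2.symm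
          rw [heq] at h3
          have := hm1 q2
          have := Nat.eq_of_mul_eq_mul_right (by omega) h3
          omega
      simpa using this
  -- y bounds
  have hyle : ∀ q < Q, y q ≤ s / 2 := by
    intro q hq
    calc y q = (q + 1) * m q := rfl
      _ ≤ Q * M := Nat.mul_le_mul hq (hm2 q)
      _ = s / 2 / M * M := by rw [hQ, Nat.div_div_eq_div_mul]
      _ ≤ s / 2 := Nat.div_mul_le_self _ _
  have hsq : 4 * (s / 2) ^ 2 ≤ N := by
    have h1 : 2 * (s / 2) ≤ s := by omega
    calc 4 * (s / 2) ^ 2 = (2 * (s / 2)) ^ 2 := by ring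
      _ ≤ s ^ 2 := Nat.pow_le_pow_left h1 2
      _ ≤ N := Nat.sqrt_le' N
  have hy2 : ∀ q < Q, y q ^ 2 + N / 2 ≤ N := by
    intro q hq
    have h1 : y q ^ 2 ≤ (s / 2) ^ 2 := Nat.pow_le_pow_left (hyle q hq) 2
    omega
  -- the finset of triples
  set T := (Y ×ˢ Finset.Icc 1 (N / 2)).image
    (fun p : ℕ × ℕ => (p.2 + p.1 ^ 2, p.2, p.1)) with hT
  have hinj : Function.Injective (fun p : ℕ × ℕ => (p.2 + p.1 ^ 2, p.2, p.1)) := by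
    intro p q hpq
    simp only [Prod.mk.injEq] at hpq
    exact Prod.ext hpq.2.2 hpq.2.1
  have hTcard : T.card = Y.card * (N / 2) := by
    rw [hT, Finset.card_image_of_injective _ hinj, Finset.card_product, Nat.card_Icc,
      Nat.add_sub_cancel]
  set S : Set (ℕ × ℕ × ℕ) := {p : ℕ × ℕ × ℕ | p.1 ∈ Set.Icc 1 N ∧ p.2.1 ∈ Set.Icc 1 N ∧
      p.2.2 ∈ B ∧ (p.1 : ℤ) - (p.2.1 : ℤ) = (p.2.2 : ℤ) ^ 2} with hS
  have hTS : ↑T ⊆ S := by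
    intro p hp
    simp only [hT, Finset.coe_image, Set.mem_image, Finset.mem_coe, Finset.mem_product,
      Finset.mem_Icc, hY, Finset.mem_image, Finset.mem_range] at hp
    obtain ⟨⟨a, x'⟩, ⟨⟨q, hqQ, hqa⟩, hx1, hx2⟩, rfl⟩ := hp
    subst hqa
    have h2 := hy2 q hqQ
    refine ⟨?_, ?_, ?_, ?_⟩
    · show x' + y q ^ 2 ∈ Set.Icc 1 N
      simp only [Set.mem_Icc]
      omega
    · show x' ∈ Set.Icc 1 N
      simp only [Set.mem_Icc]
      omega
    · show y q ∈ B
      exact hmB q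
    · show ((x' + y q ^ 2 : ℕ) : ℤ) - (x' : ℤ) = ((y q : ℕ) : ℤ) ^ 2
      push_cast
      ring
  have hSfin : S.Finite := by
    apply Set.Finite.subset (((Set.finite_Icc 1 N).prod ((Set.finite_Icc 1 N).prod
      (Set.finite_Icc 0 N))))
    rintro ⟨x, x', b⟩ ⟨h1, h2, h3, h4⟩
    simp only [Set.mem_Icc] at h1 h2 ⊢
    refine ⟨h1, h2, Nat.zero_le _, ?_⟩
    have hb : 0 < b := hBpos b h3
    have hxN : (x : ℤ) ≤ N := by exact_mod_cast h1.2
    have hx'1 : (1 : ℤ) ≤ x' := by exact_mod_cast h2.1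
    have hbN : (b : ℤ) ≤ N := by nlinarith [(by exact_mod_cast hb : (1:ℤ) ≤ (b:ℤ))]
    exact_mod_cast hbN
  have hle : T.card ≤ S.ncard := by
    rw [← Set.ncard_coe_finset]
    exact Set.ncard_le_ncard hTS hSfin
  -- real arithmetic
  set r := Real.sqrt N with hr
  have hr0 : (0 : ℝ) ≤ r := Real.sqrt_nonneg _
  have hrr : r ^ 2 = N := Real.sq_sqrt (by positivity)
  have hNR : (64 : ℝ) * (M:ℝ) ^ 2 ≤ N := by exact_mod_cast hN
  have hrM : 8 * (M : ℝ) ≤ r := by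
    rw [hr, Real.le_sqrt (by positivity) (by positivity)]
    nlinarith
  have hrs : r ≤ (s : ℝ) + 1 := by
    have h1 : (N : ℝ) < ((s : ℝ) + 1) ^ 2 := by exact_mod_cast Nat.lt_succ_sqrt' N
    nlinarith
  have hsQr : (s : ℝ) < 2 * M * Q + 2 * M := by
    have h1 : s < Q * (2 * M) + 2 * M := Nat.lt_div_mul_add hM2
    have h2 : (s : ℝ) < (Q : ℝ) * (2 * M) + 2 * M := by exact_mod_cast h1
    linarith
  have hQc : (Q : ℝ) ≤ M * Y.card := by exact_mod_cast hcard
  have hNh : (N : ℝ) ≤ 2 * ((N / 2 : ℕ) : ℝ) + 1 := by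
    have : N ≤ 2 * (N / 2) + 1 := by omega
    exact_mod_cast this
  have hM1 : (1 : ℝ) ≤ M := by exact_mod_cast hM
  have hsMr : 8 * (M : ℝ) ≤ s := by exact_mod_cast hsM
  set c := (Y.card : ℝ) with hc
  set hf := ((N / 2 : ℕ) : ℝ) with hhf
  have hc0 : 0 ≤ c := by positivity
  have h1 : 3 * (s : ℝ) ≤ 8 * M * Q := by linarith
  have h2 : 7 * r ≤ 8 * (s : ℝ) := by linarith
  have h3 : 21 * r ≤ 64 * (M : ℝ) * Q := by linarith
  have h4 : 21 * r ≤ 64 * (M : ℝ) ^ 2 * c := by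
    nlinarith [mul_le_mul_of_nonneg_left hQc (by positivity : (0:ℝ) ≤ 64 * (M:ℝ))]
  have h5 : 63 * (N : ℝ) ≤ 128 * hf := by
    have : (64 : ℝ) ≤ N := by exact_mod_cast hN64
    linarith
  have h6 : (N : ℝ) * r ≤ 8 * (M : ℝ) ^ 2 * (c * hf) := by
    have hmul := mul_le_mul h4 h5 (by positivity) (by positivity)
    nlinarith [mul_nonneg (show (0:ℝ) ≤ (N:ℝ) by positivity) hr0]
  have hrpow : (N : ℝ) ^ ((3 : ℝ) / 2) = N * r := by
    rw [show (3 : ℝ)/2 = 1 + 1/2 by norm_num,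
      Real.rpow_add (by positivity : (0:ℝ) < (N:ℝ)), Real.rpow_one, hr,
      Real.sqrt_eq_rpow]
  rw [hrpow, div_le_iff₀ (by positivity : (0:ℝ) < 8 * (M:ℝ) ^ 2)]
  have hch : c * hf ≤ (S.ncard : ℝ) := by
    have h7 : (T.card : ℝ) ≤ (S.ncard : ℝ) := by exact_mod_cast hle
    rw [hTcard] at h7
    push_cast at h7
    linarith
  nlinarith [mul_le_mul_of_nonneg_left hch (by positivity : (0:ℝ) ≤ 8 * (M:ℝ)^2)]

/-- **Homogeneous counting lemma.** -/
theorem homogeneous_counting_lemma (d M N : ℕ) (hN : 64 * M ^ 2 ≤ N)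
    (B : Fin d → Set ℕ) (hBpos : ∀ i, ∀ b ∈ B i, 0 < b)
    (hB : ∀ i, MHomogeneous M (B i)) :
    ((N : ℝ) ^ ((3 : ℝ) / 2) / (8 * (M : ℝ) ^ 2)) ^ d ≤
      (({t : (Fin d → ℕ) × (Fin d → ℕ) × (Fin d → ℕ) |
          (∀ i, t.1 i ∈ Set.Icc 1 N) ∧ (∀ i, t.2.1 i ∈ Set.Icc 1 N) ∧
          (∀ i, t.2.2 i ∈ B i) ∧
          (∀ i, (t.1 i : ℤ) - (t.2.1 i : ℤ) = (t.2.2 i : ℤ) ^ 2)}.ncard : ℝ)) := by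
  classical
  set P : Fin d → Set (ℕ × ℕ × ℕ) := fun i =>
    {p : ℕ × ℕ × ℕ | p.1 ∈ Set.Icc 1 N ∧ p.2.1 ∈ Set.Icc 1 N ∧ p.2.2 ∈ B i ∧
      (p.1 : ℤ) - (p.2.1 : ℤ) = (p.2.2 : ℤ) ^ 2} with hP
  have key : ({t : (Fin d → ℕ) × (Fin d → ℕ) × (Fin d → ℕ) |
          (∀ i, t.1 i ∈ Set.Icc 1 N) ∧ (∀ i, t.2.1 i ∈ Set.Icc 1 N) ∧
          (∀ i, t.2.2 i ∈ B i) ∧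
          (∀ i, (t.1 i : ℤ) - (t.2.1 i : ℤ) = (t.2.2 i : ℤ) ^ 2)}.ncard)
      = ∏ i : Fin d, (P i).ncard := by
    rw [← Nat.card_coe_set_eq]
    have e : ↥{t : (Fin d → ℕ) × (Fin d → ℕ) × (Fin d → ℕ) |
          (∀ i, t.1 i ∈ Set.Icc 1 N) ∧ (∀ i, t.2.1 i ∈ Set.Icc 1 N) ∧
          (∀ i, t.2.2 i ∈ B i) ∧
          (∀ i, (t.1 i : ℤ) - (t.2.1 i : ℤ) = (t.2.2 i : ℤ) ^ 2)} ≃ ∀ i, ↥(P i) :=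
      { toFun := fun t i => ⟨(t.1.1 i, t.1.2.1 i, t.1.2.2 i),
          t.2.1 i, t.2.2.1 i, t.2.2.2.1 i, t.2.2.2.2 i⟩
        invFun := fun f => ⟨(fun i => (f i).1.1, fun i => (f i).1.2.1, fun i => (f i).1.2.2),
          fun i => (f i).2.1, fun i => (f i).2.2.1, fun i => (f i).2.2.2.1,
          fun i => (f i).2.2.2.2⟩
        left_inv := fun t => rfl
        right_inv := fun f => rfl }
    rw [Nat.card_congr e, Nat.card_pi]
    exact Finset.prod_congr rfl fun i _ => Nat.card_coe_set_eq _
  rw [key]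
  push_cast
  calc ((N : ℝ) ^ ((3 : ℝ) / 2) / (8 * (M : ℝ) ^ 2)) ^ d
      = ∏ _i : Fin d, (N : ℝ) ^ ((3 : ℝ) / 2) / (8 * (M : ℝ) ^ 2) := by
        rw [Finset.prod_const, Finset.card_univ, Fintype.card_fin]
    _ ≤ ∏ i : Fin d, ((P i).ncard : ℝ) :=
        Finset.prod_le_prod (fun _ _ => by positivity)
          (fun i _ => single_count M N hN (B i) (hBpos i) (hB i))
end

section
/- Let w ∈ ℕ, let N ≥ 1 be a real number and let M > 0 be a real number. Then the number of integers n ∈ [N] that are divisible by some w-smooth integer m > M is at most 10^w · N · M^{−1/2}. -/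
open Finset

noncomputable def fhalf : ℕ →* ℝ where
  toFun n := (n : ℝ) ^ (-(1 : ℝ)/2)
  map_one' := by simp
  map_mul' m n := by
    push_cast
    rw [Real.mul_rpow (Nat.cast_nonneg m) (Nat.cast_nonneg n)]

lemma fhalf_apply (n : ℕ) : fhalf n = (n : ℝ) ^ (-(1 : ℝ)/2) := rfl

lemma fhalf_prime_le (p : ℕ) (hp : p.Prime) : fhalf p ≤ 9/10 := by
  have h2 : (2:ℝ) ≤ p := by exact_mod_cast hp.two_le
  have h1 : fhalf p ≤ (2:ℝ) ^ (-(1:ℝ)/2) :=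
    Real.rpow_le_rpow_of_nonpos (by norm_num) h2 (by norm_num)
  have hs : (10:ℝ)/9 ≤ Real.sqrt 2 := by
    nlinarith [Real.sq_sqrt (show (0:ℝ) ≤ 2 by norm_num), Real.sqrt_nonneg 2]
  have h3 : (2:ℝ) ^ (-(1:ℝ)/2) ≤ 9/10 := by
    rw [show (-(1:ℝ)/2) = -(1/2) by ring, Real.rpow_neg (by norm_num),
      ← Real.sqrt_eq_rpow]
    rw [inv_le_comm₀ (by positivity) (by norm_num)]
    linarith
  linarith

lemma sum_fhalf_le (w : ℕ) (s : Finset ℕ)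
    (hs : ∀ m ∈ s, m ∈ Nat.smoothNumbers (w+1)) :
    ∑ m ∈ s, (m : ℝ) ^ (-(1 : ℝ)/2) ≤ 10 ^ w := by
  classical
  have hnorm : ∀ {p : ℕ}, p.Prime → ‖fhalf p‖ < 1 := by
    intro p hp
    have h2 : (1:ℝ) < p := by exact_mod_cast hp.one_lt
    have hpos : (0:ℝ) ≤ (p:ℝ) ^ (-(1:ℝ)/2) := Real.rpow_nonneg (Nat.cast_nonneg p) _
    rw [fhalf_apply, Real.norm_eq_abs, abs_of_nonneg hpos]
    exact Real.rpow_lt_one_of_one_lt_of_neg h2 (by norm_num)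
  obtain ⟨-, hhs⟩ :=
    EulerProduct.summable_and_hasSum_smoothNumbers_prod_primesBelow_geometric hnorm (w+1)
  have key : ∑ m ∈ s, fhalf m ≤ ∏ p ∈ (w+1).primesBelow, (1 - fhalf p)⁻¹ := by
    have hle := sum_le_hasSum (s.subtype (· ∈ Nat.smoothNumbers (w+1)))
      (fun m _ => Real.rpow_nonneg (Nat.cast_nonneg _) _) hhs
    calc ∑ m ∈ s, fhalf m
        = ∑ i ∈ s.subtype (· ∈ Nat.smoothNumbers (w+1)), fhalf ↑i :=
          (Finset.sum_subtype_of_mem _ hs).symm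
      _ ≤ _ := hle
  have hprod : ∏ p ∈ (w+1).primesBelow, (1 - fhalf p)⁻¹ ≤ 10 ^ w := by
    have hcard : ((w+1).primesBelow).card ≤ w := by
      have hsub : (w+1).primesBelow ⊆ Finset.Ioc 1 w := fun p hp => by
        rw [Finset.mem_Ioc]
        exact ⟨(Nat.prime_of_mem_primesBelow hp).one_lt,
          Nat.lt_succ_iff.mp (Nat.lt_of_mem_primesBelow hp)⟩
      calc ((w+1).primesBelow).card ≤ (Finset.Ioc 1 w).card := Finset.card_le_card hsub
        _ = w - 1 := by rw [Nat.card_Ioc]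
        _ ≤ w := Nat.sub_le _ _
    have hfac : ∀ p ∈ (w+1).primesBelow, (1 - fhalf p)⁻¹ ≤ 10 := by
      intro p hp
      have h9 := fhalf_prime_le p (Nat.prime_of_mem_primesBelow hp)
      have : (1:ℝ)/10 ≤ 1 - fhalf p := by linarith
      calc (1 - fhalf p)⁻¹ ≤ ((1:ℝ)/10)⁻¹ := by
            apply inv_anti₀ (by norm_num) this
        _ = 10 := by norm_num
    calc ∏ p ∈ (w+1).primesBelow, (1 - fhalf p)⁻¹
        ≤ ∏ p ∈ (w+1).primesBelow, (10:ℝ) := by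
          refine Finset.prod_le_prod (fun p hp => ?_) hfac
          have h9 := fhalf_prime_le p (Nat.prime_of_mem_primesBelow hp)
          have : (1:ℝ)/10 ≤ 1 - fhalf p := by linarith
          positivity
      _ = 10 ^ ((w+1).primesBelow).card := by rw [Finset.prod_const]
      _ ≤ 10 ^ w := pow_le_pow_right₀ (by norm_num) hcard
  calc ∑ m ∈ s, (m : ℝ) ^ (-(1 : ℝ)/2) = ∑ m ∈ s, fhalf m := rfl
    _ ≤ _ := key
    _ ≤ 10 ^ w := hprod

/-- **Rankin's trick.** At most `10^w · N · M^{-1/2}` integers in `[N]` are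
divisible by a `w`-smooth number greater than `M`. -/
theorem rankin_divisible_by_large_smooth (w : ℕ) (N M : ℝ) (hN : 1 ≤ N)
    (hM : 0 < M) :
    (({n : ℕ | 1 ≤ n ∧ (n : ℝ) ≤ N ∧
        ∃ m : ℕ, M < (m : ℝ) ∧ (∀ p : ℕ, p.Prime → p ∣ m → p ≤ w) ∧
          m ∣ n}.ncard : ℝ)) ≤
      10 ^ w * N * M ^ (-(1 : ℝ) / 2) := by
  classical
  set K := ⌊N⌋₊ with hK
  set Q : ℕ → Prop := fun m => m ∈ Nat.smoothNumbers (w+1) with hQdef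
  set P : ℕ → Prop := fun n => ∃ m : ℕ, M < (m : ℝ) ∧
    (∀ p : ℕ, p.Prime → p ∣ m → p ≤ w) ∧ m ∣ n with hPdef
  set F : Finset ℕ := (Finset.Ioc 0 K).filter P with hF
  -- Step 1: ncard ≤ F.card
  have h1 : ({n : ℕ | 1 ≤ n ∧ (n : ℝ) ≤ N ∧ P n}.ncard : ℝ) ≤ (F.card : ℝ) := by
    have hsub : {n : ℕ | 1 ≤ n ∧ (n : ℝ) ≤ N ∧ P n} ⊆ ↑F := by
      intro n ⟨hn1, hnN, hnP⟩
      simp only [hF, Finset.coe_filter, Set.mem_setOf_eq, Finset.mem_Ioc]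
      exact ⟨⟨hn1, Nat.le_floor hnN⟩, hnP⟩
    have := Set.ncard_le_ncard hsub F.finite_toSet
    rw [Set.ncard_coe_finset] at this
    exact_mod_cast this
  -- witness divisor bound
  have h2 : (F.card : ℝ) ≤
      M ^ (-(1:ℝ)/2) * ∑ n ∈ Finset.Ioc 0 K, ∑ m ∈ n.divisors.filter Q, (m:ℝ) ^ ((1:ℝ)/2) := by
    rw [Finset.mul_sum]
    have hone : ∀ n ∈ F, (1:ℝ) ≤
        M ^ (-(1:ℝ)/2) * ∑ m ∈ n.divisors.filter Q, (m:ℝ) ^ ((1:ℝ)/2) := by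
      intro n hn
      rw [hF, Finset.mem_filter, Finset.mem_Ioc] at hn
      obtain ⟨⟨hn0, hnK⟩, m₀, hm₀M, hm₀s, hm₀d⟩ := hn
      have hm₀0 : m₀ ≠ 0 := by
        rintro rfl; simp at hm₀M; linarith
      have hm₀mem : m₀ ∈ n.divisors.filter Q := by
        rw [Finset.mem_filter, Nat.mem_divisors]
        refine ⟨⟨hm₀d, hn0.ne'⟩, ?_⟩
        rw [hQdef]
        exact Nat.mem_smoothNumbers'.mpr fun p hp hpd =>
          Nat.lt_succ_of_le (hm₀s p hp hpd)
      have hsingle : (m₀:ℝ) ^ ((1:ℝ)/2) ≤ ∑ m ∈ n.divisors.filter Q, (m:ℝ) ^ ((1:ℝ)/2) :=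
        Finset.single_le_sum (fun m _ => Real.rpow_nonneg (Nat.cast_nonneg m) _) hm₀mem
      have hMm : M ^ ((1:ℝ)/2) ≤ (m₀:ℝ) ^ ((1:ℝ)/2) :=
        Real.rpow_le_rpow hM.le hm₀M.le (by norm_num)
      have hMone : M ^ (-(1:ℝ)/2) * M ^ ((1:ℝ)/2) = 1 := by
        rw [← Real.rpow_add hM]; norm_num
      calc (1:ℝ) = M ^ (-(1:ℝ)/2) * M ^ ((1:ℝ)/2) := hMone.symm
        _ ≤ M ^ (-(1:ℝ)/2) * (m₀:ℝ) ^ ((1:ℝ)/2) := by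
            apply mul_le_mul_of_nonneg_left hMm (Real.rpow_nonneg hM.le _)
        _ ≤ _ := mul_le_mul_of_nonneg_left hsingle (Real.rpow_nonneg hM.le _)
    calc (F.card : ℝ) = ∑ n ∈ F, (1:ℝ) := by rw [Finset.sum_const, nsmul_eq_mul, mul_one]
      _ ≤ ∑ n ∈ F, M ^ (-(1:ℝ)/2) * ∑ m ∈ n.divisors.filter Q, (m:ℝ) ^ ((1:ℝ)/2) :=
          Finset.sum_le_sum hone
      _ ≤ ∑ n ∈ Finset.Ioc 0 K, M ^ (-(1:ℝ)/2) * ∑ m ∈ n.divisors.filter Q, (m:ℝ) ^ ((1:ℝ)/2) := by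
          refine Finset.sum_le_sum_of_subset_of_nonneg (Finset.filter_subset _ _) ?_
          intro n _ _
          have : (0:ℝ) ≤ ∑ m ∈ n.divisors.filter Q, (m:ℝ) ^ ((1:ℝ)/2) :=
            Finset.sum_nonneg fun m _ => Real.rpow_nonneg (Nat.cast_nonneg m) _
          exact mul_nonneg (Real.rpow_nonneg hM.le _) this
  -- Step 3: swap sums
  have h3 : ∑ n ∈ Finset.Ioc 0 K, ∑ m ∈ n.divisors.filter Q, (m:ℝ) ^ ((1:ℝ)/2)
      = ∑ m ∈ (Finset.Ioc 0 K).filter Q, (m:ℝ) ^ ((1:ℝ)/2) * ((K / m : ℕ) : ℝ) := by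
    have hdiv : ∀ n ∈ Finset.Ioc 0 K,
        n.divisors.filter Q = (Finset.Ioc 0 K).filter (fun m => Q m ∧ m ∣ n) := by
      intro n hn
      rw [Finset.mem_Ioc] at hn
      ext m
      simp only [Nat.mem_divisors, Finset.mem_filter, Finset.mem_Ioc]
      constructor
      · rintro ⟨⟨hmn, -⟩, hQ⟩
        exact ⟨⟨Nat.pos_of_dvd_of_pos hmn hn.1, le_trans (Nat.le_of_dvd hn.1 hmn) hn.2⟩, hQ, hmn⟩
      · rintro ⟨-, hQ, hmn⟩
        exact ⟨⟨hmn, hn.1.ne'⟩, hQ⟩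
    calc ∑ n ∈ Finset.Ioc 0 K, ∑ m ∈ n.divisors.filter Q, (m:ℝ) ^ ((1:ℝ)/2)
        = ∑ n ∈ Finset.Ioc 0 K, ∑ m ∈ Finset.Ioc 0 K,
            (if Q m ∧ m ∣ n then (m:ℝ) ^ ((1:ℝ)/2) else 0) := by
          refine Finset.sum_congr rfl fun n hn => ?_
          rw [hdiv n hn, Finset.sum_filter]
      _ = ∑ m ∈ Finset.Ioc 0 K, ∑ n ∈ Finset.Ioc 0 K,
            (if Q m ∧ m ∣ n then (m:ℝ) ^ ((1:ℝ)/2) else 0) := Finset.sum_comm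
      _ = ∑ m ∈ Finset.Ioc 0 K,
            (if Q m then (m:ℝ) ^ ((1:ℝ)/2) * ((K / m : ℕ) : ℝ) else 0) := by
          refine Finset.sum_congr rfl fun m _ => ?_
          by_cases hQ : Q m
          · simp only [hQ, true_and, if_true]
            rw [← Finset.sum_filter, Finset.sum_const, nsmul_eq_mul,
              Nat.Ioc_filter_dvd_card_eq_div, mul_comm]
          · simp [hQ]
      _ = _ := (Finset.sum_filter _ _).symm
  -- Step 4: bound the m-sum
  have h4 : ∑ m ∈ (Finset.Ioc 0 K).filter Q, (m:ℝ) ^ ((1:ℝ)/2) * ((K / m : ℕ) : ℝ)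
      ≤ N * (10 ^ w) := by
    have hterm : ∀ m ∈ (Finset.Ioc 0 K).filter Q,
        (m:ℝ) ^ ((1:ℝ)/2) * ((K / m : ℕ) : ℝ) ≤ N * (m:ℝ) ^ (-(1:ℝ)/2) := by
      intro m hm
      rw [Finset.mem_filter, Finset.mem_Ioc] at hm
      have hm0 : (0:ℝ) < m := by exact_mod_cast hm.1.1
      have hKN : (K:ℝ) ≤ N := Nat.floor_le (by linarith)
      have hcast : ((K / m : ℕ) : ℝ) ≤ N / m := by
        calc ((K / m : ℕ) : ℝ) ≤ (K:ℝ) / m := Nat.cast_div_le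
          _ ≤ N / m := by gcongr
      have hrw : N * (m:ℝ) ^ (-(1:ℝ)/2) = (m:ℝ) ^ ((1:ℝ)/2) * (N / m) := by
        rw [show (-(1:ℝ)/2) = (1:ℝ)/2 - 1 by ring, Real.rpow_sub hm0, Real.rpow_one]
        ring
      rw [hrw]
      exact mul_le_mul_of_nonneg_left hcast (Real.rpow_nonneg (Nat.cast_nonneg m) _)
    have hsum : ∑ m ∈ (Finset.Ioc 0 K).filter Q, (m:ℝ) ^ (-(1:ℝ)/2) ≤ 10 ^ w := by
      refine sum_fhalf_le w _ fun m hm => ?_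
      rw [Finset.mem_filter] at hm
      exact hm.2
    calc ∑ m ∈ (Finset.Ioc 0 K).filter Q, (m:ℝ) ^ ((1:ℝ)/2) * ((K / m : ℕ) : ℝ)
        ≤ ∑ m ∈ (Finset.Ioc 0 K).filter Q, N * (m:ℝ) ^ (-(1:ℝ)/2) :=
          Finset.sum_le_sum hterm
      _ = N * ∑ m ∈ (Finset.Ioc 0 K).filter Q, (m:ℝ) ^ (-(1:ℝ)/2) := by
          rw [Finset.mul_sum]
      _ ≤ N * 10 ^ w := by
          apply mul_le_mul_of_nonneg_left hsum (by linarith)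
  -- conclude
  have hMnn : (0:ℝ) ≤ M ^ (-(1:ℝ)/2) := Real.rpow_nonneg hM.le _
  calc ({n : ℕ | 1 ≤ n ∧ (n : ℝ) ≤ N ∧ P n}.ncard : ℝ)
      ≤ (F.card : ℝ) := h1
    _ ≤ M ^ (-(1:ℝ)/2) * ∑ n ∈ Finset.Ioc 0 K, ∑ m ∈ n.divisors.filter Q, (m:ℝ) ^ ((1:ℝ)/2) := h2
    _ = M ^ (-(1:ℝ)/2) * ∑ m ∈ (Finset.Ioc 0 K).filter Q, (m:ℝ) ^ ((1:ℝ)/2) * ((K / m : ℕ) : ℝ) := by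
        rw [h3]
    _ ≤ M ^ (-(1:ℝ)/2) * (N * 10 ^ w) := mul_le_mul_of_nonneg_left h4 hMnn
    _ = 10 ^ w * N * M ^ (-(1:ℝ)/2) := by ring
end
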